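/- arXiv:1609.03398 — 2 statements merged into one kernel-verified Lean document; each statement's English description precedes it below -/
import Mathlib

section
/- Fix an integer d ≥ 3. Let C be an indeterminate and define φ_C(x) = x^d − Cd·x^{d−1} + C(d−1) ∈ (ℤ[C])[x], and for n ≥ 1 let P_n ∈ ℤ[C] be the evaluation at x = 0 of the n-th iterate of φ_C, i.e. P_n = φ_C^n(0). Then for every n ≥ 3 there exist at least three distinct elements α of an algebraic closure of ℚ such that α is a simple root of P_n and P_m(α) ≠ 0 for every proper divisor m of n with 1 ≤ m < n. -/
/-!
Let `p` be a prime dividing `d`. Modulo `p` the recursion `P_{n+1} = φ_C(P_n)` becomes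
`P_{n+1} ≡ P_n^d - C`, so the reduction of `P_n` has degree `d^{n-1}` and derivative `-1`.
Hence `P_n` has degree exactly `d^{n-1}` and its resultant with `P_n'` is nonzero modulo `p`,
so `P_n` is separable over `ℚ` and has `d^{n-1}` simple roots. The proper divisors `m` of `n`
are at most `n/2`, so the `P_m` together have fewer than `d^{n-2}` roots, which leaves at least
`(d - 1) d^{n-2} ≥ 3` roots of `P_n` that are not roots of any `P_m`.
-/

open Polynomial

noncomputable section

/-- The `n`-th iterate of a polynomial under composition: `polyIter φ 0 = X`,
`polyIter φ (n+1) = φ ∘ (polyIter φ n)`. -/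
def polyIter {R : Type*} [CommRing R] (φ : Polynomial R) : ℕ → Polynomial R
  | 0 => X
  | n + 1 => φ.comp (polyIter φ n)

/-- The splitting field `K_n` of the `n`-th iterate of `φ ∈ ℤ[x]` over `ℚ`, inside a fixed
algebraic closure of `ℚ`. -/
def Kfield (φ : Polynomial ℤ) (n : ℕ) : IntermediateField ℚ (AlgebraicClosure ℚ) :=
  IntermediateField.adjoin ℚ ((polyIter φ n).rootSet (AlgebraicClosure ℚ))

/-- The order of `Gal(K_n / K_{n-1})`: the number of automorphisms of `K_n` over `ℚ`
fixing every element of `K_{n-1}` pointwise. -/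
def relGalCard (φ : Polynomial ℤ) (n : ℕ) : ℕ :=
  Nat.card {σ : Kfield φ n ≃ₐ[ℚ] Kfield φ n //
    ∀ (x : AlgebraicClosure ℚ) (_ : x ∈ Kfield φ (n - 1)) (hx' : x ∈ Kfield φ n),
      σ ⟨x, hx'⟩ = ⟨x, hx'⟩}

end

/-- Separability descends from a reduction that preserves the degree, since the resultant of
`f` and `f'` is nonzero as soon as its image is. -/
theorem Polynomial.Separable.of_map_of_natDegree_map_eq {R F K : Type*} [CommRing R] [Field F]
    [Field K] {f : R[X]} (φ : R →+* F) (hf : f.natDegree ≠ 0)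
    (hdeg : (f.map φ).natDegree = f.natDegree) (hsep : (f.map φ).Separable)
    (ψ : R →+* K) (hψ : Function.Injective ψ) : (f.map ψ).Separable := by
  set m := f.natDegree
  set r := resultant f (derivative f) m (m - 1)
  have hr : φ r ≠ 0 := by
    rw [← resultant_map_map, ← derivative_map]
    obtain ⟨k, hk⟩ := Nat.exists_eq_add_of_le
      ((natDegree_derivative_le (f.map φ)).trans_eq (by rw [hdeg]))
    have hf0 : f.map φ ≠ 0 := fun h ↦ hf (by rw [← hdeg, h, natDegree_zero])
    rw [hk, resultant_add_right_deg _ _ _ _ _ le_rfl, ← hdeg]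
    exact mul_ne_zero (pow_ne_zero _ (leadingCoeff_ne_zero.mpr hf0)) (resultant_ne_zero _ _ hsep)
  have hψr : ψ r ≠ 0 := (map_ne_zero_iff ψ hψ).mpr fun h ↦ hr (by rw [h, map_zero])
  obtain ⟨a, b, -, -, hab⟩ :=
    exists_mul_add_mul_eq_C_resultant f (derivative f) le_rfl (natDegree_derivative_le f) (.inl hf)
  have hinv : C (ψ r)⁻¹ * C (ψ r) = 1 := by rw [← C_mul, inv_mul_cancel₀ hψr, C_1]
  have hab' := congrArg (Polynomial.map ψ) hab
  simp only [Polynomial.map_add, Polynomial.map_mul, map_C, ← derivative_map] at hab'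
  exact ⟨C (ψ r)⁻¹ * a.map ψ, C (ψ r)⁻¹ * b.map ψ, by linear_combination C (ψ r)⁻¹ * hab' + hinv⟩

theorem Polynomial.natDegree_sub_sum_le_card_roots_sdiff {K ι : Type*} [Field K] [IsAlgClosed K]
    [DecidableEq K] {f : K[X]} (hf : f.Separable) (s : Finset ι) (g : ι → K[X]) :
    f.natDegree - ∑ i ∈ s, (g i).natDegree ≤
      (f.roots.toFinset \ s.biUnion fun i ↦ (g i).roots.toFinset).card := by
  have hroots : f.roots.toFinset.card = f.natDegree := by
    rw [Multiset.toFinset_card_of_nodup (nodup_roots hf), IsAlgClosed.card_roots_eq_natDegree]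
  have hbad : (s.biUnion fun i ↦ (g i).roots.toFinset).card ≤ ∑ i ∈ s, (g i).natDegree :=
    Finset.card_biUnion_le.trans <| Finset.sum_le_sum fun i _ ↦
      (Multiset.toFinset_card_le _).trans (card_roots' _)
  rw [← hroots]
  exact (Nat.sub_le_sub_left hbad _).trans (Finset.le_card_sdiff _ _)

theorem Polynomial.exists_three_simple_roots_of_sum_natDegree_add_three_le {K ι : Type*}
    [Field K] [IsAlgClosed K] {f : K[X]} (hf : f.Separable) (s : Finset ι) (g : ι → K[X])
    (hg : ∀ i ∈ s, g i ≠ 0) (hdeg : ∑ i ∈ s, (g i).natDegree + 3 ≤ f.natDegree) :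
    ∃ α₁ α₂ α₃ : K, α₁ ≠ α₂ ∧ α₁ ≠ α₃ ∧ α₂ ≠ α₃ ∧ ∀ α ∈ ({α₁, α₂, α₃} : Set K),
      f.rootMultiplicity α = 1 ∧ ∀ i ∈ s, (g i).eval α ≠ 0 := by
  classical
  set B := s.biUnion fun i ↦ (g i).roots.toFinset
  have hcard : 2 < (f.roots.toFinset \ B).card :=
    lt_of_lt_of_le (by omega) (natDegree_sub_sum_le_card_roots_sdiff hf s g)
  obtain ⟨α₁, h₁, α₂, h₂, α₃, h₃, h₁₂, h₁₃, h₂₃⟩ := Finset.two_lt_card.mp hcard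
  refine ⟨α₁, α₂, α₃, h₁₂, h₁₃, h₂₃, fun α hα ↦ ?_⟩
  obtain ⟨hroot, hgood⟩ : α ∈ f.roots.toFinset ∧ α ∉ B := by
    rw [← Finset.mem_sdiff]
    rcases hα with rfl | rfl | rfl <;> assumption
  refine ⟨?_, fun i hi hαi ↦ hgood (Finset.mem_biUnion.mpr ⟨i, hi, ?_⟩)⟩
  · rw [← count_roots]
    exact Multiset.count_eq_one_of_mem (nodup_roots hf) (Multiset.mem_toFinset.mp hroot)
  · exact Multiset.mem_toFinset.mpr ((mem_roots (hg i hi)).mpr hαi)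

theorem Nat.sum_properDivisors_pow_sub_one_lt {d n : ℕ} (hd : 2 ≤ d) (hn : 3 ≤ n) :
    ∑ m ∈ n.properDivisors, d ^ (m - 1) < d ^ (n - 2) := by
  have hpos {m : ℕ} (hm : m ∈ n.properDivisors) : 1 ≤ m := Nat.pos_of_mem_properDivisors hm
  rw [← Finset.sum_image (g := (· - 1)) fun x hx y hy h ↦ by
    have := hpos hx; have := hpos hy; simp only at h; omega]
  refine Nat.geomSum_lt hd fun k hk ↦ ?_
  obtain ⟨m, hm, rfl⟩ := Finset.mem_image.mp hk
  obtain ⟨⟨c, rfl⟩, hlt⟩ := Nat.mem_properDivisors.mp hm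
  have hm1 := hpos hm
  have hc : 2 ≤ c := (Nat.lt_mul_iff_one_lt_right hm1).mp hlt
  have : m * 2 ≤ m * c := Nat.mul_le_mul_left m hc
  omega

noncomputable section

/-- The polynomial `φ_C(x) = x^d - C d x^{d-1} + C (d - 1)`, with the parameter `C` playing the
role of the variable of the coefficient ring `ℤ[C]`. -/
def phiC (d : ℕ) : ℤ[X][X] :=
  X ^ d - C ((Polynomial.C (d : ℤ)) * X) * X ^ (d - 1) + C ((Polynomial.C ((d : ℤ) - 1)) * X)

/-- `P_n = φ_C^n(0)`: the orbit of the critical point `0`. -/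
def critOrbit (d n : ℕ) : ℤ[X] := (polyIter (phiC d) n).eval 0

end

variable {d : ℕ}

theorem critOrbit_zero : critOrbit d 0 = 0 := by simp [critOrbit, polyIter]

theorem critOrbit_succ (n : ℕ) :
    critOrbit d (n + 1) = critOrbit d n ^ d - Polynomial.C (d : ℤ) * X * critOrbit d n ^ (d - 1)
      + Polynomial.C ((d : ℤ) - 1) * X := by
  simp [critOrbit, polyIter, phiC]

theorem natDegree_critOrbit_succ_le (hd : 2 ≤ d) (n : ℕ) :
    (critOrbit d (n + 1)).natDegree ≤ d ^ n := by
  have hCX (a : ℤ) : (Polynomial.C a * X).natDegree ≤ 1 :=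
    (natDegree_C_mul_le _ _).trans natDegree_X_le
  induction n with
  | zero =>
    rw [critOrbit_succ, critOrbit_zero, zero_pow (by omega), zero_pow (by omega), mul_zero,
      sub_zero, zero_add, pow_zero]
    exact hCX _
  | succ k ih =>
    have hk : d ^ k ≤ d * d ^ k := Nat.le_mul_of_pos_left _ (by omega)
    have hk1 : 1 ≤ d ^ k := Nat.one_le_pow _ _ (by omega)
    have hmid : 1 + (d - 1) * d ^ k ≤ d * d ^ k := by rw [Nat.sub_one_mul]; omega
    rw [critOrbit_succ, pow_succ']
    refine natDegree_add_le_of_degree_le (natDegree_sub_le_iff_left ?_ |>.mpr ?_)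
      ((hCX _).trans (by omega))
    · exact (natDegree_mul_le_of_le (hCX _) (natDegree_pow_le_of_le _ ih)).trans hmid
    · exact natDegree_pow_le_of_le _ ih

section Reduction

variable {p : ℕ} [Fact p.Prime]

theorem map_critOrbit_succ (hpd : p ∣ d) (n : ℕ) :
    (critOrbit d (n + 1)).map (Int.castRingHom (ZMod p)) =
      (critOrbit d n).map (Int.castRingHom (ZMod p)) ^ d - X := by
  have hd : (d : (ZMod p)[X]) = 0 := (CharP.cast_eq_zero_iff _ p d).mpr hpd
  simp [critOrbit_succ, hd, sub_eq_add_neg]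

theorem derivative_map_critOrbit_succ (hpd : p ∣ d) (n : ℕ) :
    derivative ((critOrbit d (n + 1)).map (Int.castRingHom (ZMod p))) = -1 := by
  have hd : (d : (ZMod p)[X]) = 0 := (CharP.cast_eq_zero_iff _ p d).mpr hpd
  simp [map_critOrbit_succ hpd, derivative_pow, hd]

theorem natDegree_map_critOrbit_succ (hd : 2 ≤ d) (hpd : p ∣ d) (n : ℕ) :
    ((critOrbit d (n + 1)).map (Int.castRingHom (ZMod p))).natDegree = d ^ n := by
  induction n with
  | zero => simp [map_critOrbit_succ hpd, critOrbit_zero, zero_pow (by omega : d ≠ 0)]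
  | succ k ih =>
    have hk : 1 < d * d ^ k :=
      Nat.one_lt_mul_iff.mpr ⟨by omega, Nat.one_le_pow _ _ (by omega), by omega⟩
    rw [map_critOrbit_succ hpd, natDegree_sub_eq_left_of_natDegree_lt, natDegree_pow, ih,
      pow_succ']
    rwa [natDegree_pow, ih, natDegree_X]

end Reduction

theorem natDegree_critOrbit (hd : 2 ≤ d) {n : ℕ} (hn : n ≠ 0) :
    (critOrbit d n).natDegree = d ^ (n - 1) := by
  obtain ⟨k, rfl⟩ := Nat.exists_eq_succ_of_ne_zero hn
  have : Fact d.minFac.Prime := ⟨Nat.minFac_prime (by omega)⟩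
  exact le_antisymm (natDegree_critOrbit_succ_le hd k)
    ((natDegree_map_critOrbit_succ hd d.minFac_dvd k).symm.trans_le natDegree_map_le)

theorem natDegree_map_critOrbit (hd : 2 ≤ d) {n : ℕ} (hn : n ≠ 0) (K : Type*) [Ring K]
    [CharZero K] : ((critOrbit d n).map (Int.castRingHom K)).natDegree = d ^ (n - 1) := by
  rw [natDegree_map_eq_of_injective (RingHom.injective_int _), natDegree_critOrbit hd hn]

theorem separable_map_critOrbit (hd : 2 ≤ d) {n : ℕ} (hn : n ≠ 0) (K : Type*) [Field K]
    [CharZero K] : ((critOrbit d n).map (Int.castRingHom K)).Separable := by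
  obtain ⟨k, rfl⟩ := Nat.exists_eq_succ_of_ne_zero hn
  have : Fact d.minFac.Prime := ⟨Nat.minFac_prime (by omega)⟩
  refine Separable.of_map_of_natDegree_map_eq (Int.castRingHom (ZMod d.minFac)) ?_ ?_ ?_ _
    (RingHom.injective_int _)
  · rw [natDegree_critOrbit hd hn]
    positivity
  · rw [natDegree_map_critOrbit_succ hd d.minFac_dvd, natDegree_critOrbit hd hn]
    rfl
  · rw [Separable, derivative_map_critOrbit_succ d.minFac_dvd]
    exact isCoprime_one_right.neg_right

/-- Fix `d ≥ 3` and let `φ_C(x) = x^d - Cd·x^{d-1} + C(d-1)` over `ℤ[C]`,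
with `P_n = φ_C^n(0) ∈ ℤ[C]`. Then for every `n ≥ 3` there are at least three distinct
elements `α` of an algebraic closure of `ℚ` that are simple roots of `P_n` and are not roots of
`P_m` for any proper divisor `m` of `n` with `1 ≤ m < n`. -/
theorem stmt_17 (d : ℕ) (hd : 3 ≤ d)
    (ψ : Polynomial (Polynomial ℤ))
    (hψ : ψ = X ^ d - C ((Polynomial.C (d : ℤ)) * X) * X ^ (d - 1)
      + C ((Polynomial.C ((d : ℤ) - 1)) * X)) :
    ∀ n : ℕ, 3 ≤ n →
      ∃ α₁ α₂ α₃ : AlgebraicClosure ℚ, α₁ ≠ α₂ ∧ α₁ ≠ α₃ ∧ α₂ ≠ α₃ ∧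
        ∀ α ∈ ({α₁, α₂, α₃} : Set (AlgebraicClosure ℚ)),
          Polynomial.rootMultiplicity α
              (((polyIter ψ n).eval 0).map (algebraMap ℤ (AlgebraicClosure ℚ))) = 1 ∧
            ∀ m : ℕ, m ∣ n → 1 ≤ m → m < n →
              Polynomial.aeval α ((polyIter ψ m).eval 0) ≠ 0 := by
  intro n hn
  have hP (m : ℕ) : (polyIter ψ m).eval 0 = critOrbit d m := by rw [hψ]; rfl
  simp only [hP, ← eval_map_algebraMap]
  have hF {m : ℕ} (hm : m ≠ 0) :=
    natDegree_map_critOrbit (d := d) (by omega) hm (AlgebraicClosure ℚ)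
  have hsep := separable_map_critOrbit (d := d) (n := n) (by omega) (by omega) (AlgebraicClosure ℚ)
  have hbad : ∑ m ∈ n.properDivisors, d ^ (m - 1) < d ^ (n - 2) :=
    Nat.sum_properDivisors_pow_sub_one_lt (by omega) hn
  have hpow : d ^ (n - 1) = d * d ^ (n - 2) := by rw [← pow_succ']; congr 1; omega
  have : 3 * d ^ (n - 2) ≤ d * d ^ (n - 2) := Nat.mul_le_mul_right _ hd
  obtain ⟨α₁, α₂, α₃, h₁₂, h₁₃, h₂₃, hα⟩ := exists_three_simple_roots_of_sum_natDegree_add_three_le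
    hsep n.properDivisors
    (fun m ↦ (critOrbit d m).map (Int.castRingHom (AlgebraicClosure ℚ)))
    (fun m hm ↦ ne_zero_of_natDegree_gt (n := 0)
      (by rw [hF (Nat.pos_of_mem_properDivisors hm).ne']; positivity))
    (by
      rw [Finset.sum_congr rfl fun m hm ↦ hF (Nat.pos_of_mem_properDivisors hm).ne',
        hF (m := n) (by omega)]
      omega)
  exact ⟨α₁, α₂, α₃, h₁₂, h₁₃, h₂₃, fun α hα' ↦ ⟨(hα α hα').1,
    fun m hmn _ hmlt ↦ (hα α hα').2 m (Nat.mem_properDivisors.mpr ⟨hmn, hmlt⟩)⟩⟩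
end

section
/- Let d ≥ 3 and let c be a positive integer, and let φ(x) = x^d − cd·x^{d−1} + c(d−1) ∈ ℤ[x]. Then the sequence b_n = φ^n(0), n ≥ 1, is a rigid divisibility sequence of nonzero integers: (1) for every prime q and all n, m ≥ 1, if q divides φ^n(0) then v_q(φ^{mn}(0)) = v_q(φ^n(0)); and (2) for every prime q and all n, m ≥ 1, min(v_q(φ^n(0)), v_q(φ^m(0))) ≤ v_q(φ^{gcd(m,n)}(0)). -/
open Polynomial

lemma polyIter_zero' {R : Type*} [CommRing R] (φ : Polynomial R) : polyIter φ 0 = X := rfl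

lemma polyIter_succ' {R : Type*} [CommRing R] (φ : Polynomial R) (n : ℕ) :
    polyIter φ (n + 1) = φ.comp (polyIter φ n) := rfl

lemma polyIter_add' {R : Type*} [CommRing R] (φ : Polynomial R) (m n : ℕ) :
    polyIter φ (m + n) = (polyIter φ m).comp (polyIter φ n) := by
  induction m with
  | zero => simp [polyIter_zero']
  | succ m ih =>
    have h : m + 1 + n = (m + n) + 1 := by omega
    rw [h, polyIter_succ', polyIter_succ', ih, Polynomial.comp_assoc]

lemma coeff_one_eq_derivative_eval {R : Type*} [CommRing R] (p : Polynomial R) :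
    p.coeff 1 = (derivative p).eval 0 := by
  rw [← Polynomial.coeff_zero_eq_eval_zero, Polynomial.coeff_derivative]
  simp

lemma X_sq_dvd_sub_C (p : Polynomial ℤ) (h : p.coeff 1 = 0) :
    (X : Polynomial ℤ) ^ 2 ∣ p - C (p.eval 0) := by
  rw [Polynomial.X_pow_dvd_iff]
  intro i hi
  rw [Polynomial.coeff_sub, Polynomial.coeff_C]
  interval_cases i
  · rw [if_pos rfl, Polynomial.coeff_zero_eq_eval_zero, sub_self]
  · rw [if_neg one_ne_zero, h, sub_zero]

lemma sq_dvd_eval_sub (p : Polynomial ℤ) (h : (X : Polynomial ℤ) ^ 2 ∣ p - C (p.eval 0))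
    (a : ℤ) : a ^ 2 ∣ p.eval a - p.eval 0 := by
  obtain ⟨g, hg⟩ := h
  have h2 := congrArg (Polynomial.eval a) hg
  simp only [Polynomial.eval_sub, Polynomial.eval_C, Polynomial.eval_mul,
    Polynomial.eval_pow, Polynomial.eval_X] at h2
  exact ⟨g.eval a, by linarith⟩

/-- For `d ≥ 3`, `c ≥ 1` and `φ(x) = x^d - cd·x^{d-1} + c(d-1)`, the
sequence `b_n = φ^n(0)` (`n ≥ 1`) is a rigid divisibility sequence of nonzero integers:
(1) if a prime `q` divides `φ^n(0)` then `v_q(φ^{mn}(0)) = v_q(φ^n(0))`, and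
(2) `min(v_q(φ^n(0)), v_q(φ^m(0))) ≤ v_q(φ^{gcd(m,n)}(0))`. -/
theorem stmt_19 (d c : ℕ) (hd : 3 ≤ d) (hc : 0 < c)
    (φ : Polynomial ℤ)
    (hφ : φ = X ^ d - C ((c : ℤ) * d) * X ^ (d - 1) + C ((c : ℤ) * ((d : ℤ) - 1))) :
    (∀ n : ℕ, 1 ≤ n → (polyIter φ n).eval 0 ≠ 0) ∧
    (∀ q : ℕ, q.Prime → ∀ n m : ℕ, 1 ≤ n → 1 ≤ m →
      (q : ℤ) ∣ (polyIter φ n).eval 0 →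
      padicValInt q ((polyIter φ (m * n)).eval 0) = padicValInt q ((polyIter φ n).eval 0)) ∧
    (∀ q : ℕ, q.Prime → ∀ n m : ℕ, 1 ≤ n → 1 ≤ m →
      min (padicValInt q ((polyIter φ n).eval 0)) (padicValInt q ((polyIter φ m).eval 0))
        ≤ padicValInt q ((polyIter φ (Nat.gcd m n)).eval 0)) := by
  set b : ℕ → ℤ := fun n => (polyIter φ n).eval 0 with hb
  -- coefficient of X^1 of φ is 0
  have hd1 : d ≠ 1 := by omega
  have hd2 : d - 1 ≠ 1 := by omega
  have hφ1 : φ.coeff 1 = 0 := by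
    have e1 : (1 : ℕ) ≠ d := by omega
    have e2 : (1 : ℕ) ≠ d - 1 := by omega
    rw [hφ, Polynomial.coeff_add, Polynomial.coeff_sub, Polynomial.coeff_C_mul,
      Polynomial.coeff_X_pow, Polynomial.coeff_X_pow, Polynomial.coeff_C,
      if_neg e1, if_neg e2, if_neg one_ne_zero]
    ring
  -- coefficient of X^1 of every iterate (k ≥ 1) is 0
  have hcoeff : ∀ k, 1 ≤ k → (polyIter φ k).coeff 1 = 0 := by
    intro k hk
    induction k with
    | zero => omega
    | succ k ih =>
      rcases Nat.eq_zero_or_pos k with hk0 | hk1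
      · subst hk0
        rw [polyIter_succ', polyIter_zero', Polynomial.comp_X]
        exact hφ1
      · rw [polyIter_succ', coeff_one_eq_derivative_eval, Polynomial.derivative_comp,
          Polynomial.eval_mul]
        have h0 : (derivative (polyIter φ k)).eval 0 = 0 := by
          rw [← coeff_one_eq_derivative_eval]; exact ih hk1
        rw [h0, zero_mul]
  -- key congruence: (b n)^2 ∣ b (k + n) - b k for k ≥ 1
  have hshift : ∀ n k, b (k + n) = (polyIter φ k).eval (b n) := by
    intro n k
    simp only [hb, polyIter_add', Polynomial.eval_comp]
  have hkey : ∀ k n, 1 ≤ k → (b n) ^ 2 ∣ b (k + n) - b k := by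
    intro k n hk
    have h := sq_dvd_eval_sub _ (X_sq_dvd_sub_C _ (hcoeff k hk)) (b n)
    rw [hshift n k]
    exact h
  -- exact power of q divides all multiples
  have hmult : ∀ q : ℕ, q.Prime → ∀ e, 1 ≤ e → ∀ n, 1 ≤ n →
      (q : ℤ) ^ e ∣ b n → ¬ (q : ℤ) ^ (e + 1) ∣ b n →
      ∀ m, 1 ≤ m → (q : ℤ) ^ e ∣ b (m * n) ∧ ¬ (q : ℤ) ^ (e + 1) ∣ b (m * n) := by
    intro q hq e he n hn h1 h2 m hm
    induction m, hm using Nat.le_induction with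
    | base => rw [one_mul]; exact ⟨h1, h2⟩
    | succ m hm ih =>
      have hmn : 1 ≤ m * n := Nat.one_le_iff_ne_zero.mpr (by positivity)
      have hdiff : (b n) ^ 2 ∣ b (m * n + n) - b (m * n) := hkey (m * n) n hmn
      have hqsq : (q : ℤ) ^ (e + 1) ∣ (b n) ^ 2 := by
        calc (q : ℤ) ^ (e + 1) ∣ (q : ℤ) ^ (2 * e) := pow_dvd_pow _ (by omega)
          _ = (q : ℤ) ^ e * (q : ℤ) ^ e := by ring
          _ ∣ (b n) ^ 2 := by
              rw [sq]; exact mul_dvd_mul h1 h1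
      have hdiff' : (q : ℤ) ^ (e + 1) ∣ b (m * n + n) - b (m * n) := hqsq.trans hdiff
      have heq : (m + 1) * n = m * n + n := by ring
      rw [heq]
      constructor
      · have : b (m * n + n) = b (m * n) + (b (m * n + n) - b (m * n)) := by ring
        rw [this]
        exact dvd_add ih.1 ((pow_dvd_pow _ (by omega : e ≤ e + 1)).trans hdiff')
      · intro hcon
        apply ih.2
        have : b (m * n) = b (m * n + n) - (b (m * n + n) - b (m * n)) := by ring
        rw [this]
        exact dvd_sub hcon hdiff'
  -- value of b 1
  have hdd : 1 ≤ d := by omega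
  set N : ℕ := c * (d - 1) with hN
  have hb1 : b 1 = (N : ℤ) := by
    have h1 : polyIter φ 1 = φ := by rw [polyIter_succ', polyIter_zero', Polynomial.comp_X]
    have hd0 : d ≠ 0 := by omega
    have hdm0 : d - 1 ≠ 0 := by omega
    have hb1' : b 1 = φ.eval 0 := by simp only [hb]; rw [h1]
    rw [hb1', hφ, Polynomial.eval_add, Polynomial.eval_sub, Polynomial.eval_mul,
      Polynomial.eval_pow, Polynomial.eval_pow, Polynomial.eval_X, Polynomial.eval_C,
      Polynomial.eval_C, zero_pow hd0, zero_pow hdm0, hN]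
    push_cast [Nat.cast_sub hdd]
    ring
  have hN2 : 2 ≤ N := by
    have : 2 ≤ d - 1 := by omega
    calc 2 = 1 * 2 := by ring
      _ ≤ c * (d - 1) := Nat.mul_le_mul hc this
  -- nonvanishing
  have hnz : ∀ n, 1 ≤ n → b n ≠ 0 := by
    have hN1 : N ≠ 1 := by omega
    have hN0 : N ≠ 0 := by omega
    set q0 := N.minFac with hq0def
    have hq0 : q0.Prime := Nat.minFac_prime hN1
    haveI : Fact q0.Prime := ⟨hq0⟩
    set e0 := padicValNat q0 N with he0def
    have he0 : 1 ≤ e0 := by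
      have h := (padicValNat_dvd_iff (p := q0) 1 N).mp (by rw [pow_one]; exact N.minFac_dvd)
      rcases h with h | h
      · exact absurd h hN0
      · exact h
    have h1 : (q0 : ℤ) ^ e0 ∣ (N : ℤ) := by
      exact_mod_cast Int.natCast_dvd_natCast.mpr pow_padicValNat_dvd
    have h2 : ¬ (q0 : ℤ) ^ (e0 + 1) ∣ (N : ℤ) := by
      intro hcon
      exact pow_succ_padicValNat_not_dvd hN0 (by exact_mod_cast hcon)
    intro n hn
    have h := hmult q0 hq0 e0 he0 1 le_rfl (hb1 ▸ h1) (hb1 ▸ h2) n hn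
    rw [mul_one] at h
    intro h0
    exact h.2 (h0 ▸ dvd_zero _)
  -- uniqueness of the exact exponent
  have huniq : ∀ q : ℕ, q.Prime → ∀ e, ∀ x : ℤ, x ≠ 0 → (q : ℤ) ^ e ∣ x →
      ¬ (q : ℤ) ^ (e + 1) ∣ x → padicValInt q x = e := by
    intro q hq e x hx h1 h2
    haveI : Fact q.Prime := ⟨hq⟩
    have ha := (padicValInt_dvd_iff e x).mp h1
    have hb' : ¬ (e + 1 ≤ padicValInt q x) := fun h =>
      h2 ((padicValInt_dvd_iff _ x).mpr (Or.inr h))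
    rcases ha with h | h
    · exact absurd h hx
    · omega
  -- part 1
  have part1 : ∀ q : ℕ, q.Prime → ∀ n m, 1 ≤ n → 1 ≤ m → (q : ℤ) ∣ b n →
      padicValInt q (b (m * n)) = padicValInt q (b n) := by
    intro q hq n m hn hm hdvd
    haveI : Fact q.Prime := ⟨hq⟩
    set e := padicValInt q (b n) with hedef
    have hbn := hnz n hn
    have h1 : (q : ℤ) ^ e ∣ b n := padicValInt_dvd _
    have h2 : ¬ (q : ℤ) ^ (e + 1) ∣ b n := by
      intro h
      rcases (padicValInt_dvd_iff _ _).mp h with h' | h'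
      · exact hbn h'
      · omega
    have he : 1 ≤ e := by
      have := (padicValInt_dvd_iff 1 (b n)).mp (by simpa using hdvd)
      rcases this with h' | h'
      · exact absurd h' hbn
      · omega
    have h := hmult q hq e he n hn h1 h2 m hm
    have hmn : 1 ≤ m * n := Nat.one_le_iff_ne_zero.mpr (by positivity)
    exact huniq q hq e _ (hnz _ hmn) h.1 h.2
  -- divisibility transfer mod q
  have hstripe : ∀ q : ℕ, ∀ m, 1 ≤ m → (q : ℤ) ∣ b m → ∀ k, 1 ≤ k →
      ((q : ℤ) ∣ b (k + m) ↔ (q : ℤ) ∣ b k) := by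
    intro q m hm hqm k hk
    have h := hkey k m hk
    have hq2 : (q : ℤ) ∣ (b m) ^ 2 := hqm.trans (dvd_pow_self _ (by norm_num))
    have hqd : (q : ℤ) ∣ b (k + m) - b k := hq2.trans h
    constructor
    · intro h'
      have : b k = b (k + m) - (b (k + m) - b k) := by ring
      rw [this]; exact dvd_sub h' hqd
    · intro h'
      have : b (k + m) = b k + (b (k + m) - b k) := by ring
      rw [this]; exact dvd_add h' hqd
  have hmod : ∀ q : ℕ, ∀ m, 1 ≤ m → (q : ℤ) ∣ b m → ∀ j k, 1 ≤ k →
      ((q : ℤ) ∣ b (k + j * m) ↔ (q : ℤ) ∣ b k) := by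
    intro q m hm hqm j
    induction j with
    | zero => intro k hk; simp
    | succ j ih =>
      intro k hk
      have heq : k + (j + 1) * m = (k + j * m) + m := by ring
      rw [heq]
      have hkjm : 1 ≤ k + j * m := by omega
      rw [hstripe q m hm hqm _ hkjm]
      exact ih k hk
  -- gcd divisibility
  have hgcd : ∀ q : ℕ, ∀ m, 1 ≤ m → ∀ n, 1 ≤ n → (q : ℤ) ∣ b m → (q : ℤ) ∣ b n →
      (q : ℤ) ∣ b (Nat.gcd m n) := by
    intro q m
    induction m using Nat.strong_induction_on with
    | _ m IH =>
      intro hm n hn hbm hbn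
      rw [Nat.gcd_rec m n]
      rcases Nat.eq_zero_or_pos (n % m) with h0 | hr
      · rw [h0, Nat.gcd_zero_left]
        exact hbm
      · have hlt : n % m < m := Nat.mod_lt _ hm
        have hbr : (q : ℤ) ∣ b (n % m) := by
          have h := hmod q m hm hbm (n / m) (n % m) hr
          rw [Nat.mod_add_div' n m] at h
          exact h.mp hbn
        exact IH (n % m) hlt hr m hm hbr hbm
  refine ⟨hnz, part1, ?_⟩
  -- part 2
  intro q hq n m hn hm
  haveI : Fact q.Prime := ⟨hq⟩
  set g := Nat.gcd m n with hg
  have hg1 : 1 ≤ g := Nat.gcd_pos_of_pos_right m hn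
  by_cases hdq : (q : ℤ) ∣ b g
  · obtain ⟨t, ht⟩ := Nat.gcd_dvd_right m n
    have ht1 : 1 ≤ t := by
      rcases Nat.eq_zero_or_pos t with h0 | h
      · subst h0; rw [Nat.mul_zero] at ht; omega
      · exact h
    have h := part1 q hq g t hg1 ht1 hdq
    have heq : t * g = n := by rw [Nat.mul_comm, hg]; exact ht.symm
    rw [heq] at h
    calc min (padicValInt q (b n)) (padicValInt q (b m)) ≤ padicValInt q (b n) :=
        min_le_left _ _
      _ = padicValInt q (b g) := h
  · have hor : ¬ ((q : ℤ) ∣ b n) ∨ ¬ ((q : ℤ) ∣ b m) := by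
      by_contra hcon
      push_neg at hcon
      exact hdq (hgcd q m hm n hn hcon.2 hcon.1)
    rcases hor with h | h
    · have h0 : padicValInt q (b n) = 0 := padicValInt.eq_zero_of_not_dvd h
      exact le_trans (le_of_le_of_eq (min_le_left _ _) h0) (Nat.zero_le _)
    · have h0 : padicValInt q (b m) = 0 := padicValInt.eq_zero_of_not_dvd h
      exact le_trans (le_of_le_of_eq (min_le_right _ _) h0) (Nat.zero_le _)
end
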